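/- arXiv:2102.11555 — 3 statements merged into one kernel-verified Lean document; each statement's English description precedes it below -/
import Mathlib

section
/- Let p ≥ 2 and α₂ > 0, and let C : ℝ → ℝ be a nonnegative function satisfying, for all x, x' ∈ ℝ and all λ ∈ (0,1), 0 ≤ λ·C(x) + (1−λ)·C(x') − C(λx + (1−λ)x') ≤ α₂·λ(1−λ)·(1 + C(x) + C(x'))^{1−2/p}·|x−x'|². Then C is convex on ℝ, continuously differentiable on ℝ, and its derivative C' is locally Lipschitz continuous. -/
/-!
The left inequality is the convexity of `C`. On a bounded interval where `C ≤ M`, the right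
inequality bounds the convexity gap of `C` by `K t (1 - t) |x - x'|²` with
`K = α₂ (1 + 2M) ^ (1 - 2 / p)`, and this says exactly that `y ↦ K y² - C y` is convex there.
If both `f` and `y ↦ K y² - f y` are convex, the inequality "left derivative ≤ right derivative"
holds for both, hence with both signs for `f`, so `f` is differentiable; moreover `f'` and
`y ↦ 2 K y - f' y` are both monotone, which makes `f'` Lipschitz with constant `2K`.
-/

open Set

namespace ConvexOn

variable {S : Set ℝ} {f q : ℝ → ℝ} {x q' K : ℝ}

theorem hasDerivAt_of_convexOn_sub (hf : ConvexOn ℝ S f)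
    (hqf : ConvexOn ℝ S (q - f)) (hx : x ∈ interior S) (hq : HasDerivAt q q' x) :
    HasDerivAt f (derivWithin f (Ioi x) x) x := by
  set r := derivWithin f (Ioi x) x
  set l := derivWithin f (Iio x) x
  have hr : HasDerivWithinAt f r (Ioi x) x := hf.hasDerivWithinAt_rightDeriv_of_mem_interior hx
  have hl : HasDerivWithinAt f l (Iio x) x := hf.hasDerivWithinAt_leftDeriv_of_mem_interior hx
  have hlr : l ≤ r := hf.leftDeriv_le_rightDeriv_of_mem_interior hx
  have hrl : q' - l ≤ q' - r := by
    have h := hqf.leftDeriv_le_rightDeriv_of_mem_interior hx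
    rwa [(hq.hasDerivWithinAt.sub hl).derivWithin (uniqueDiffWithinAt_Iio x),
      (hq.hasDerivWithinAt.sub hr).derivWithin (uniqueDiffWithinAt_Ioi x)] at h
  have hlr' : l = r := by linarith
  rw [hlr'] at hl
  simpa using (hl.Iic_of_Iio.union hr.Ici_of_Ioi).hasDerivAt (by simp)

theorem differentiableAt_of_convexOn_mul_sq_sub (hf : ConvexOn ℝ S f)
    (hg : ConvexOn ℝ S (fun y ↦ K * y ^ 2 - f y)) (hx : x ∈ interior S) :
    DifferentiableAt ℝ f x :=
  (hf.hasDerivAt_of_convexOn_sub (q := fun y ↦ K * y ^ 2) hg hx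
    ((hasDerivAt_pow 2 x).const_mul K)).differentiableAt

theorem lipschitzOnWith_deriv_of_convexOn_mul_sq_sub (hS : IsOpen S) (hf : ConvexOn ℝ S f)
    (hg : ConvexOn ℝ S (fun y ↦ K * y ^ 2 - f y)) :
    LipschitzOnWith (2 * K).toNNReal (deriv f) S := by
  have hfd : ∀ y ∈ S, DifferentiableAt ℝ f y := fun y hy ↦
    hf.differentiableAt_of_convexOn_mul_sq_sub hg (by rwa [hS.interior_eq])
  have hsq (y : ℝ) : HasDerivAt (fun y ↦ K * y ^ 2) (2 * K * y) y := by
    simpa [mul_comm, mul_left_comm] using (hasDerivAt_pow 2 y).const_mul K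
  have hgd (y : ℝ) (hy : y ∈ S) : HasDerivAt (fun y ↦ K * y ^ 2 - f y) (2 * K * y - deriv f y) y :=
    (hsq y).sub (hfd y hy).hasDerivAt
  have hmono : MonotoneOn (deriv f) S := hf.monotoneOn_deriv hfd
  have hmono' : MonotoneOn (fun y ↦ 2 * K * y - deriv f y) S := by
    intro y hy z hz hyz
    simpa only [(hgd y hy).deriv, (hgd z hz).deriv] using
      hg.monotoneOn_deriv (fun y hy ↦ (hgd y hy).differentiableAt) hy hz hyz
  refine LipschitzOnWith.of_le_add_mul' _ fun y hy z hz ↦ ?_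
  rw [Real.dist_eq]
  rcases le_total y z with hyz | hzy
  · have := hmono' hy hz hyz
    rw [abs_of_nonpos (sub_nonpos.2 hyz)]
    simp only at this
    linarith [hmono hy hz hyz]
  · have := hmono' hz hy hzy
    rw [abs_of_nonneg (sub_nonneg.2 hzy)]
    simp only at this
    linarith

end ConvexOn

theorem convexOn_mul_sq_sub_of_sub_le {S : Set ℝ} (hS : Convex ℝ S) {f : ℝ → ℝ} {K : ℝ}
    (h : ∀ x ∈ S, ∀ y ∈ S, ∀ t ∈ Ioo (0 : ℝ) 1,
      t * f x + (1 - t) * f y - f (t * x + (1 - t) * y) ≤ K * t * (1 - t) * (x - y) ^ 2) :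
    ConvexOn ℝ S (fun y ↦ K * y ^ 2 - f y) := by
  refine convexOn_iff_forall_pos.2 ⟨hS, fun x hx y hy a b ha hb hab ↦ ?_⟩
  obtain rfl : b = 1 - a := by linarith
  have := h x hx y hy a ⟨ha, by linarith⟩
  simp only [smul_eq_mul]
  nlinarith

theorem convexOn_mul_sq_sub_of_rpow_bound {r α M : ℝ} (hr : 0 ≤ r) (hα : 0 ≤ α)
    {C : ℝ → ℝ} (hC_nonneg : ∀ x, 0 ≤ C x)
    (hC : ∀ x x' t : ℝ, t ∈ Ioo (0 : ℝ) 1 → t * C x + (1 - t) * C x' - C (t * x + (1 - t) * x') ≤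
      α * t * (1 - t) * (1 + C x + C x') ^ r * |x - x'| ^ 2)
    {S : Set ℝ} (hS : Convex ℝ S) (hM : ∀ x ∈ S, C x ≤ M) :
    ConvexOn ℝ S (fun y ↦ α * (1 + 2 * M) ^ r * y ^ 2 - C y) := by
  refine convexOn_mul_sq_sub_of_sub_le hS fun x hx y hy t ht ↦ ?_
  have hbase : (1 + C x + C y) ^ r ≤ (1 + 2 * M) ^ r :=
    Real.rpow_le_rpow (by linarith [hC_nonneg x, hC_nonneg y])
      (by linarith [hM x hx, hM y hy]) hr
  have ht₀ := ht.1
  have ht₁ := sub_pos.2 ht.2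
  calc t * C x + (1 - t) * C y - C (t * x + (1 - t) * y)
      ≤ α * t * (1 - t) * (1 + C x + C y) ^ r * |x - y| ^ 2 := hC x y t ht
    _ = α * t * (1 - t) * (x - y) ^ 2 * (1 + C x + C y) ^ r := by rw [sq_abs]; ring
    _ ≤ α * t * (1 - t) * (x - y) ^ 2 * (1 + 2 * M) ^ r := by gcongr
    _ = α * (1 + 2 * M) ^ r * t * (1 - t) * (x - y) ^ 2 := by ring

/-- Assumption 2.1(iii) of the paper implies that the cost function `C` is convex,
continuously differentiable, and has a locally Lipschitz derivative. -/
theorem stmt_0 (p α₂ : ℝ) (hp : 2 ≤ p) (hα₂ : 0 < α₂) (C : ℝ → ℝ)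
    (hC_nonneg : ∀ x : ℝ, 0 ≤ C x)
    (hC : ∀ x x' lam : ℝ, lam ∈ Set.Ioo (0:ℝ) 1 →
      0 ≤ lam * C x + (1 - lam) * C x' - C (lam * x + (1 - lam) * x') ∧
      lam * C x + (1 - lam) * C x' - C (lam * x + (1 - lam) * x') ≤
        α₂ * lam * (1 - lam) * (1 + C x + C x') ^ (1 - 2 / p) * |x - x'| ^ 2) :
    ConvexOn ℝ Set.univ C ∧ ContDiff ℝ 1 C ∧ LocallyLipschitz (deriv C) := by
  have hexp : 0 ≤ 1 - 2 / p := by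
    rw [sub_nonneg, div_le_one (by linarith)]
    exact hp
  have hconv : ConvexOn ℝ univ C := by
    refine convexOn_iff_forall_pos.2 ⟨convex_univ, fun x _ y _ a b ha hb hab ↦ ?_⟩
    obtain rfl : b = 1 - a := by linarith
    have := (hC x y a ⟨ha, by linarith⟩).1
    simp only [smul_eq_mul]
    linarith
  have hcont : Continuous C := continuousOn_univ.1 (hconv.continuousOn isOpen_univ)
  have hlocal (x : ℝ) : ∃ K, ConvexOn ℝ (Ioo (x - 1) (x + 1)) (fun y ↦ K * y ^ 2 - C y) := by
    obtain ⟨M, hM⟩ := isCompact_Icc.bddAbove_image (hcont.continuousOn (s := Icc (x - 1) (x + 1)))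
    exact ⟨_, convexOn_mul_sq_sub_of_rpow_bound hexp hα₂.le hC_nonneg
      (fun x x' t ht ↦ (hC x x' t ht).2) (convex_Ioo _ _)
      fun y hy ↦ hM ⟨y, Ioo_subset_Icc_self hy, rfl⟩⟩
  have hconv_loc (x : ℝ) : ConvexOn ℝ (Ioo (x - 1) (x + 1)) C :=
    hconv.subset (subset_univ _) (convex_Ioo _ _)
  have hx_mem (x : ℝ) : x ∈ Ioo (x - 1) (x + 1) := ⟨by linarith, by linarith⟩
  have hdiff : Differentiable ℝ C := fun x ↦ by
    obtain ⟨K, hK⟩ := hlocal x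
    exact (hconv_loc x).differentiableAt_of_convexOn_mul_sq_sub hK
      (by rw [isOpen_Ioo.interior_eq]; exact hx_mem x)
  have hlip : LocallyLipschitz (deriv C) := fun x ↦ by
    obtain ⟨K, hK⟩ := hlocal x
    exact ⟨_, _, isOpen_Ioo.mem_nhds (hx_mem x),
      (hconv_loc x).lipschitzOnWith_deriv_of_convexOn_mul_sq_sub isOpen_Ioo hK⟩
  exact ⟨hconv, contDiff_one_iff_deriv.2 ⟨hdiff, hlip.continuous⟩, hlip⟩
end

section
/- Let K⁺, K⁻ > 0 and let v : ℝ × (0,1) → ℝ be continuous, nondecreasing in its first variable, and nondecreasing in its second variable. Assume there exist x₊*, x₋* ∈ ℝ such that v(x,π) ≤ −K⁺ whenever x ≤ x₊* and v(x,π) ≥ K⁻ whenever x ≥ x₋*, for every π ∈ (0,1). Define v̄(x,φ) := (1+φ)·v(x, φ/(1+φ)), b₊(φ) := sup{x ∈ ℝ : v̄(x,φ) ≤ −K⁺(1+φ)} and b₋(φ) := inf{x ∈ ℝ : v̄(x,φ) ≥ K⁻(1+φ)} for φ ∈ (0,∞). Then: (i) b₊ and b₋ are real-valued and nonincreasing on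 (0,∞); (ii) b₊ is left-continuous and b₋ is right-continuous on (0,∞); (iii) x₊* ≤ b₊(φ) < b₋(φ) ≤ x₋* for all φ ∈ (0,∞). -/
/-!
For `φ > 0` the factor `1 + φ` cancels, so the two stopping regions in `x` are the sublevel set
`{x | v x π ≤ -K⁺}` and the superlevel set `{x | K⁻ ≤ v x π}` at `π = φ / (1 + φ)`. Since `v` is
monotone and continuous in `x`, these are closed half-lines `Iic (b₊ φ)` and `Ici (b₋ φ)`, and
`b₊ φ < b₋ φ` because `-K⁺ < K⁻`. As `φ` grows, so does `π` and hence `v`: the first half-line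
shrinks and the second grows, so both boundaries are antitone. Continuity of `v` in `π` makes
`{φ | x ≤ b₊ φ} = {φ | v x π(φ) ≤ -K⁺}` closed, which for an antitone function is exactly left
continuity; symmetrically `b₋` is right continuous.
-/

open Set Filter Topology

section Threshold

variable {α β : Type*} [ConditionallyCompleteLinearOrder α] [TopologicalSpace α] [OrderTopology α]
  [LinearOrder β] [TopologicalSpace β] [OrderClosedTopology β] {g : α → β} {a b : α} {c : β}

theorem Monotone.setOf_le_eq_Iic_csSup (hg : Monotone g) (hgc : Continuous g) (ha : g a ≤ c)
    (hb : c < g b) : {x | g x ≤ c} = Iic (sSup {x | g x ≤ c}) := by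
  have hbdd : BddAbove {x | g x ≤ c} := ⟨b, fun x hx => (hg.reflect_lt (hx.trans_lt hb)).le⟩
  have hmem : sSup {x | g x ≤ c} ∈ {x | g x ≤ c} :=
    (isClosed_le hgc continuous_const).csSup_mem ⟨a, ha⟩ hbdd
  exact Subset.antisymm (fun x hx => le_csSup hbdd hx) fun x hx => (hg hx).trans hmem

theorem Monotone.setOf_ge_eq_Ici_csInf (hg : Monotone g) (hgc : Continuous g) (ha : g a < c)
    (hb : c ≤ g b) : {x | c ≤ g x} = Ici (sInf {x | c ≤ g x}) :=
  @Monotone.setOf_le_eq_Iic_csSup αᵒᵈ βᵒᵈ _ _ _ _ _ _ g b a c hg.dual hgc hb ha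

end Threshold

section Boundary

variable {α β γ : Type*} [LinearOrder α] [LinearOrder β] [LinearOrder γ]
  {F : α → γ → β} {b : α → γ} {s : Set α} {φ : α} {c : β}

theorem antitoneOn_of_forall_le_iff (hb : ∀ φ ∈ s, ∀ x, F φ x ≤ c ↔ x ≤ b φ)
    (hF : ∀ x, MonotoneOn (F · x) s) : AntitoneOn b s := fun φ hφ ψ hψ hφψ =>
  (hb φ hφ _).1 <| (hF _ hφ hψ hφψ).trans <| (hb ψ hψ _).2 le_rfl

theorem antitoneOn_of_forall_ge_iff (hb : ∀ φ ∈ s, ∀ x, c ≤ F φ x ↔ b φ ≤ x)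
    (hF : ∀ x, MonotoneOn (F · x) s) : AntitoneOn b s := fun _ hφ _ hψ hφψ =>
  antitoneOn_of_forall_le_iff (α := αᵒᵈ) (β := βᵒᵈ) (γ := γᵒᵈ) hb (fun x => (hF x).dual) hψ hφ hφψ

variable [TopologicalSpace α] [OrderClosedTopology α] [TopologicalSpace β] [OrderClosedTopology β]
  [TopologicalSpace γ] [OrderTopology γ]

theorem AntitoneOn.continuousWithinAt_Iio_of_forall_le (hb : AntitoneOn b s) (hφ : φ ∈ s)
    (hs : s ∈ 𝓝[<] φ) (hclosed : ∀ y, (∀ ψ ∈ s ∩ Iio φ, y ≤ b ψ) → y ≤ b φ) :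
    ContinuousWithinAt b (Iio φ) φ := by
  have hs' : s ∩ Iio φ ∈ 𝓝[<] φ := inter_mem hs self_mem_nhdsWithin
  refine tendsto_order.2 ⟨fun y hy => ?_, fun y hy => ?_⟩
  · filter_upwards [hs'] with ψ hψ
    exact hy.trans_le (hb hψ.1 hφ hψ.2.le)
  · obtain ⟨ψ₀, hψ₀, hbψ₀⟩ : ∃ ψ₀ ∈ s ∩ Iio φ, b ψ₀ < y := by
      by_contra! h
      exact hy.not_ge (hclosed y h)
    filter_upwards [hs', Ioo_mem_nhdsLT hψ₀.2] with ψ hψ hψ'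
    exact (hb hψ₀.1 hψ.1 hψ'.1.le).trans_lt hbψ₀

theorem continuousWithinAt_Iio_of_forall_le_iff [hne : (𝓝[<] φ).NeBot]
    (hb : ∀ φ ∈ s, ∀ x, F φ x ≤ c ↔ x ≤ b φ) (hF : ∀ x, MonotoneOn (F · x) s) (hφ : φ ∈ s)
    (hs : s ∈ 𝓝[<] φ) (hFc : ∀ x, ContinuousWithinAt (F · x) (Iio φ) φ) :
    ContinuousWithinAt b (Iio φ) φ :=
  (antitoneOn_of_forall_le_iff hb hF).continuousWithinAt_Iio_of_forall_le hφ hs fun y hy =>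
    (hb φ hφ y).1 <| le_of_tendsto (hFc y) <|
      mem_of_superset (inter_mem hs self_mem_nhdsWithin) fun ψ hψ => (hb ψ hψ.1 y).2 (hy ψ hψ)

theorem continuousWithinAt_Ioi_of_forall_ge_iff [(𝓝[>] φ).NeBot]
    (hb : ∀ φ ∈ s, ∀ x, c ≤ F φ x ↔ b φ ≤ x) (hF : ∀ x, MonotoneOn (F · x) s) (hφ : φ ∈ s)
    (hs : s ∈ 𝓝[>] φ) (hFc : ∀ x, ContinuousWithinAt (F · x) (Ioi φ) φ) :
    ContinuousWithinAt b (Ioi φ) φ :=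
  continuousWithinAt_Iio_of_forall_le_iff (α := αᵒᵈ) (β := βᵒᵈ) (γ := γᵒᵈ) (hne := ‹_›) hb
    (fun x => (hF x).dual) hφ hs hFc

end Boundary

theorem div_one_add_mem_Ioo {φ : ℝ} (hφ : 0 < φ) : φ / (1 + φ) ∈ Ioo (0 : ℝ) 1 :=
  ⟨by positivity, (div_lt_one (by positivity)).2 (by linarith)⟩

theorem monotoneOn_div_one_add : MonotoneOn (fun φ : ℝ => φ / (1 + φ)) (Ioi (-1)) := by
  intro φ hφ ψ hψ hφψ
  have hφ' : 0 < 1 + φ := by linarith [hφ.out]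
  have hψ' : 0 < 1 + ψ := by linarith [hψ.out]
  rw [div_le_div_iff₀ hφ' hψ']
  linarith

theorem ContinuousOn.continuousAt_comp_prodMk {W X Y Z : Type*} [TopologicalSpace W]
    [TopologicalSpace X] [TopologicalSpace Y] [TopologicalSpace Z] {v : X → Y → Z} {t : Set Y}
    (hv : ContinuousOn (fun q : X × Y => v q.1 q.2) (univ ×ˢ t)) (ht : IsOpen t) {f : W → X}
    {g : W → Y} {w : W} (hf : ContinuousAt f w) (hg : ContinuousAt g w) (hgw : g w ∈ t) :
    ContinuousAt (fun y => v (f y) (g y)) w :=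
  (hv.continuousAt ((isOpen_univ.prod ht).mem_nhds ⟨mem_univ _, hgw⟩)).comp (hf.prodMk hg)

/-- Proposition 4.5 of the paper: properties of the free boundaries `b₊, b₋` of the Dynkin
game in likelihood-ratio coordinates. -/
theorem stmt_4 (Kp Km : ℝ) (hKp : 0 < Kp) (hKm : 0 < Km)
    (v : ℝ → ℝ → ℝ)
    (hv_cont : ContinuousOn (fun q : ℝ × ℝ => v q.1 q.2) (Set.univ ×ˢ Set.Ioo 0 1))
    (hv_x : ∀ π ∈ Set.Ioo (0:ℝ) 1, Monotone fun x => v x π)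
    (hv_pi : ∀ x : ℝ, MonotoneOn (fun π => v x π) (Set.Ioo 0 1))
    (xps xms : ℝ)
    (hbd_p : ∀ π ∈ Set.Ioo (0:ℝ) 1, ∀ x : ℝ, x ≤ xps → v x π ≤ -Kp)
    (hbd_m : ∀ π ∈ Set.Ioo (0:ℝ) 1, ∀ x : ℝ, xms ≤ x → Km ≤ v x π)
    (vbar : ℝ → ℝ → ℝ)
    (hvbar : ∀ x φ : ℝ, vbar x φ = (1 + φ) * v x (φ / (1 + φ)))
    (bp bm : ℝ → ℝ)
    (hbp : ∀ φ : ℝ, bp φ = sSup {x : ℝ | vbar x φ ≤ -Kp * (1 + φ)})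
    (hbm : ∀ φ : ℝ, bm φ = sInf {x : ℝ | Km * (1 + φ) ≤ vbar x φ}) :
    (∀ φ ∈ Set.Ioi (0:ℝ),
        IsLUB {x : ℝ | vbar x φ ≤ -Kp * (1 + φ)} (bp φ) ∧
        IsGLB {x : ℝ | Km * (1 + φ) ≤ vbar x φ} (bm φ)) ∧
    AntitoneOn bp (Set.Ioi 0) ∧ AntitoneOn bm (Set.Ioi 0) ∧
    (∀ φ ∈ Set.Ioi (0:ℝ), ContinuousWithinAt bp (Set.Iio φ) φ) ∧
    (∀ φ ∈ Set.Ioi (0:ℝ), ContinuousWithinAt bm (Set.Ioi φ) φ) ∧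
    (∀ φ ∈ Set.Ioi (0:ℝ), xps ≤ bp φ ∧ bp φ < bm φ ∧ bm φ ≤ xms) := by
  set F : ℝ → ℝ → ℝ := fun φ x => v x (φ / (1 + φ))
  have hK : -Kp < Km := by linarith
  have hπ : MapsTo (fun φ : ℝ => φ / (1 + φ)) (Ioi 0) (Ioo 0 1) := fun _ => div_one_add_mem_Ioo
  have hF_x : ∀ φ ∈ Ioi (0 : ℝ), Continuous (F φ) := fun φ hφ => continuous_iff_continuousAt.2
    fun _ => hv_cont.continuousAt_comp_prodMk isOpen_Ioo continuousAt_id continuousAt_const (hπ hφ)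
  have hF_φ : ∀ x, ∀ φ ∈ Ioi (0 : ℝ), ContinuousAt (F · x) φ := fun x φ hφ =>
    hv_cont.continuousAt_comp_prodMk isOpen_Ioo continuousAt_const
      (continuousAt_id.div (by fun_prop) (by linarith [hφ.out] : (0:ℝ) < 1 + φ).ne') (hπ hφ)
  have hF_mono : ∀ x, MonotoneOn (F · x) (Ioi 0) := fun x =>
    (hv_pi x).comp (monotoneOn_div_one_add.mono (Ioi_subset_Ioi (by norm_num))) hπ
  have hle : ∀ φ ∈ Ioi (0 : ℝ), ∀ x c, vbar x φ ≤ c * (1 + φ) ↔ F φ x ≤ c := fun φ hφ x c => by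
    rw [hvbar, mul_comm c]
    exact mul_le_mul_iff_right₀ (by linarith [hφ.out])
  have hge : ∀ φ ∈ Ioi (0 : ℝ), ∀ x c, c * (1 + φ) ≤ vbar x φ ↔ c ≤ F φ x := fun φ hφ x c => by
    rw [hvbar, mul_comm c]
    exact mul_le_mul_iff_right₀ (by linarith [hφ.out])
  have hup : ∀ φ ∈ Ioi (0 : ℝ), {x | F φ x ≤ -Kp} = Iic (bp φ) := fun φ hφ => by
    simp only [hbp, hle φ hφ]
    exact (hv_x _ (hπ hφ)).setOf_le_eq_Iic_csSup (hF_x φ hφ) (hbd_p _ (hπ hφ) xps le_rfl)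
      (hK.trans_le (hbd_m _ (hπ hφ) xms le_rfl))
  have hdown : ∀ φ ∈ Ioi (0 : ℝ), {x | Km ≤ F φ x} = Ici (bm φ) := fun φ hφ => by
    simp only [hbm, hge φ hφ]
    exact (hv_x _ (hπ hφ)).setOf_ge_eq_Ici_csInf (hF_x φ hφ)
      ((hbd_p _ (hπ hφ) xps le_rfl).trans_lt hK) (hbd_m _ (hπ hφ) xms le_rfl)
  have hp : ∀ φ ∈ Ioi (0 : ℝ), ∀ x, F φ x ≤ -Kp ↔ x ≤ bp φ := fun φ hφ => Set.ext_iff.1 (hup φ hφ)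
  have hm : ∀ φ ∈ Ioi (0 : ℝ), ∀ x, Km ≤ F φ x ↔ bm φ ≤ x := fun φ hφ => Set.ext_iff.1 (hdown φ hφ)
  refine ⟨fun φ hφ => ⟨?_, ?_⟩, antitoneOn_of_forall_le_iff hp hF_mono,
    antitoneOn_of_forall_ge_iff hm hF_mono, fun φ hφ => ?_, fun φ hφ => ?_, fun φ hφ => ⟨?_, ?_, ?_⟩⟩
  · simp only [hle φ hφ, hup φ hφ, isLUB_Iic]
  · simp only [hge φ hφ, hdown φ hφ, isGLB_Ici]
  · exact continuousWithinAt_Iio_of_forall_le_iff hp hF_mono hφ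
      (mem_nhdsWithin_of_mem_nhds (Ioi_mem_nhds hφ)) fun x => (hF_φ x φ hφ).continuousWithinAt
  · exact continuousWithinAt_Ioi_of_forall_ge_iff hm hF_mono hφ
      (mem_nhdsWithin_of_mem_nhds (Ioi_mem_nhds hφ)) fun x => (hF_φ x φ hφ).continuousWithinAt
  · exact (hp φ hφ xps).1 (hbd_p _ (hπ hφ) xps le_rfl)
  · exact (hv_x _ (hπ hφ)).reflect_lt <|
      ((hp φ hφ _).2 le_rfl).trans_lt <| hK.trans_le <| (hm φ hφ _).2 le_rfl
  · exact (hm φ hφ xms).1 (hbd_m _ (hπ hφ) xms le_rfl)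
end

section
/- Let ζ > 0, β > 0, c > 0, let f : ℝ → ℝ be nonincreasing, let h : ℝ → ℝ be Lipschitz continuous, let a < t be real numbers, and let w : ℝ → ℝ be any function. Define V(s) := f(c·e^{β·w(s)}) − ζ·w(s) + h(s). (i) If limsup_{s→t⁻} (w(t) − w(s))/(t − s) = +∞, then there exists s ∈ [a,t) with V(s) > V(t); in particular t is not a maximum point of V on [a,t]. (ii) If liminf_{s→t⁻} (w(t) − w(s))/(t − s) = −∞, then there exists s ∈ [a,t) with V(s) < V(t); in particular t is not a minimum point of V on [a,t]. -/
/-!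
Write `V s = G (w s) + h s` with `G x = f (c e^{β x}) - ζ x`. Since `f` is nonincreasing,
`G x + ζ x` is nonincreasing, so `G` drops by at least `ζ (y - x)` from `x` to `y ≥ x`, while the
Lipschitz term moves by at most `L (t - s)`. A left difference quotient of `w` at `t` exceeding
`L / ζ` therefore forces `V s > V t`. Part (ii) is part (i) for `x ↦ -G (-x)`, `-w` and `-h`,
which turns `V` into `-V`.
-/

open Set Filter Topology NNReal

theorem exists_mem_Ico_of_frequently_nhdsLT {p : ℝ → Prop} {a t : ℝ} (hat : a < t)
    (hp : ∃ᶠ s in 𝓝[<] t, p s) : ∃ s ∈ Ico a t, p s :=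
  let ⟨s, hps, hs⟩ := (hp.and_eventually (Ico_mem_nhdsLT hat)).exists
  ⟨s, hs, hps⟩

section SlopeComparison

variable {ζ : ℝ} {G : ℝ → ℝ}

theorem mul_sub_le_sub_of_antitone_add_mul (hG : Antitone fun x => G x + ζ * x) {x y : ℝ}
    (hxy : x ≤ y) : ζ * (y - x) ≤ G x - G y := by
  have := hG hxy
  simp only at this
  linarith

theorem Antitone.neg_comp_neg_add_mul (hG : Antitone fun x => G x + ζ * x) :
    Antitone fun x => -G (-x) + ζ * x := fun x y hxy => by
  have := hG (neg_le_neg hxy)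
  simp only at this ⊢
  linarith

theorem lt_of_lipschitzWith_of_div_lt_slope (hζ : 0 < ζ) (hG : Antitone fun x => G x + ζ * x) {h : ℝ → ℝ}
    {L : ℝ≥0} (hh : LipschitzWith L h) {w : ℝ → ℝ} {s t : ℝ} (hst : s < t)
    (hslope : L / ζ < (w t - w s) / (t - s)) : G (w t) + h t < G (w s) + h s := by
  have hts : 0 < t - s := sub_pos.mpr hst
  have hw : L * (t - s) < ζ * (w t - w s) := by
    rw [div_lt_div_iff₀ hζ hts] at hslope
    linarith
  have hh_le : h t - h s ≤ L * (t - s) := by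
    have := hh.dist_le_mul t s
    rw [Real.dist_eq, Real.dist_eq, abs_of_pos hts] at this
    exact (le_abs_self _).trans this
  have hws : w s ≤ w t := by
    have : 0 < ζ * (w t - w s) := (by positivity : (0 : ℝ) ≤ L * (t - s)).trans_lt hw
    exact sub_nonneg.mp (pos_of_mul_pos_right this hζ.le).le
  have hG_le := mul_sub_le_sub_of_antitone_add_mul hG hws
  linarith

end SlopeComparison

/-- Deterministic core of Lemma C.1 of the paper: if the left upper (resp. lower) Dini
quotient of `w` at `t` is `+∞` (resp. `−∞`), then `t` is not a maximum (resp. minimum) point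
of `s ↦ f(c·e^{β·w(s)}) − ζ·w(s) + h(s)` on `[a,t]`. -/
theorem stmt_10 (ζ β c : ℝ) (hζ : 0 < ζ) (hβ : 0 < β) (hc : 0 < c)
    (f : ℝ → ℝ) (hf : Antitone f) (h : ℝ → ℝ) (L : NNReal) (hh : LipschitzWith L h)
    (a t : ℝ) (hat : a < t) (w : ℝ → ℝ) (V : ℝ → ℝ)
    (hV : ∀ s : ℝ, V s = f (c * Real.exp (β * w s)) - ζ * w s + h s) :
    ((∀ M : ℝ, ∃ᶠ s in nhdsWithin t (Set.Iio t), M < (w t - w s) / (t - s)) →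
      ∃ s ∈ Set.Ico a t, V t < V s) ∧
    ((∀ M : ℝ, ∃ᶠ s in nhdsWithin t (Set.Iio t), (w t - w s) / (t - s) < M) →
      ∃ s ∈ Set.Ico a t, V s < V t) := by
  set G : ℝ → ℝ := fun x => f (c * Real.exp (β * x)) - ζ * x
  have hG : Antitone fun x => G x + ζ * x := fun x y hxy => by
    simpa [G] using hf (by gcongr)
  have hVG : ∀ s, V s = G (w s) + h s := hV
  constructor
  · intro H
    obtain ⟨s, hs, hslope⟩ := exists_mem_Ico_of_frequently_nhdsLT hat (H (L / ζ))
    refine ⟨s, hs, ?_⟩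
    rw [hVG, hVG]
    exact lt_of_lipschitzWith_of_div_lt_slope hζ hG hh hs.2 hslope
  · intro H
    obtain ⟨s, hs, hslope⟩ := exists_mem_Ico_of_frequently_nhdsLT hat (H (-(L / ζ)))
    refine ⟨s, hs, ?_⟩
    have := lt_of_lipschitzWith_of_div_lt_slope (w := -w) hζ hG.neg_comp_neg_add_mul hh.neg hs.2 <| by
      rw [Pi.neg_apply, Pi.neg_apply, show (-w t - -w s) / (t - s) = -((w t - w s) / (t - s)) by ring]
      linarith
    rw [hVG, hVG]
    simp only [Pi.neg_apply, neg_neg] at this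
    linarith
end
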